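/- For nonzero vectors x, y, z in a finite-dimensional real or complex inner product space, |cos²(θ(x,z)) − cos²(θ(y,z))| ≤ sin(θ(x,y)). -/

import Mathlib

/-!
Over `ℂ`, the acute angle `θ(x, y)` is the least real angle between `x` and a unimodular multiple
`c • y`, attained when `c * ⟪x, y⟫` is real and nonnegative. Hence the triangle inequality for real
angles passes to `θ`, giving `|θ(x, z) - θ(y, z)| ≤ θ(x, y) ≤ π / 2`. It remains to note that
`cos² a - cos² b = sin (b - a) * sin (b + a)` and that `sin` is monotone on `[-π/2, π/2]`.
-/

open scoped InnerProductSpace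

/-- The acute angle between two vectors of an inner product space over `𝕜 = ℝ` or `ℂ`:
`θ(x,y) = arccos (|(x,y)| / (‖x‖‖y‖)) ∈ [0, π/2]`. -/
noncomputable def acuteAngle (𝕜 : Type*) {H : Type*} [RCLike 𝕜] [NormedAddCommGroup H]
    [InnerProductSpace 𝕜 H] (x y : H) : ℝ :=
  Real.arccos (‖(inner 𝕜 x y : 𝕜)‖ / (‖x‖ * ‖y‖))

open Real

theorem abs_cos_sq_sub_cos_sq_le_sin {a b c : ℝ} (hab : |a - b| ≤ c) (hc : c ≤ π / 2) :
    |cos a ^ 2 - cos b ^ 2| ≤ sin c := by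
  have hsin : |sin (b - a)| ≤ sin c := by
    obtain ⟨h₁, h₂⟩ := abs_le.mp hab
    refine abs_le.mpr ⟨?_, sin_le_sin_of_le_of_le_pi_div_two (by linarith) hc (by linarith)⟩
    rw [neg_le, ← sin_neg, neg_sub]
    exact sin_le_sin_of_le_of_le_pi_div_two (by linarith) hc (by linarith)
  calc |cos a ^ 2 - cos b ^ 2| = |sin (b - a)| * |sin (b + a)| := by
        rw [← abs_mul, sin_sub, sin_add]
        congr 1
        linear_combination cos b ^ 2 * sin_sq_add_cos_sq a - cos a ^ 2 * sin_sq_add_cos_sq b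
    _ ≤ |sin (b - a)| := mul_le_of_le_one_right (abs_nonneg _) (abs_sin_le_one _)
    _ ≤ sin c := hsin

theorem RCLike.exists_norm_eq_one_mul_eq_norm {𝕜 : Type*} [RCLike 𝕜] (a : 𝕜) :
    ∃ c : 𝕜, ‖c‖ = 1 ∧ c * a = ‖a‖ := by
  rcases eq_or_ne a 0 with rfl | ha
  · exact ⟨1, by simp, by simp⟩
  · exact ⟨‖a‖ / a, by simp [ha], div_mul_cancel₀ _ ha⟩

section AcuteAngle

variable {𝕜 H : Type*} [RCLike 𝕜] [NormedAddCommGroup H] [InnerProductSpace 𝕜 H]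

local notation "∠ᵣ" => @InnerProductGeometry.angle H _ (InnerProductSpace.rclikeToReal 𝕜 H)

theorem acuteAngle_comm (x y : H) : acuteAngle 𝕜 x y = acuteAngle 𝕜 y x := by
  rw [acuteAngle, acuteAngle, norm_inner_symm, mul_comm]

theorem acuteAngle_le_pi_div_two (x y : H) : acuteAngle 𝕜 x y ≤ π / 2 :=
  arccos_le_pi_div_two.mpr (by positivity)

theorem acuteAngle_smul_left {c : 𝕜} (hc : c ≠ 0) (x y : H) :
    acuteAngle 𝕜 (c • x) y = acuteAngle 𝕜 x y := by
  rw [acuteAngle, acuteAngle, inner_smul_left, norm_mul, RCLike.norm_conj, norm_smul, mul_assoc,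
    mul_div_mul_left _ _ (norm_ne_zero_iff.mpr hc)]

theorem acuteAngle_le_angle_smul_right (x y : H) (c : 𝕜) : acuteAngle 𝕜 x y ≤ ∠ᵣ x (c • y) := by
  let _ : InnerProductSpace ℝ H := InnerProductSpace.rclikeToReal 𝕜 H
  refine arccos_le_arccos ?_
  rw [real_inner_eq_re_inner 𝕜, inner_smul_right, norm_smul, mul_left_comm]
  rcases eq_or_ne c 0 with rfl | hc
  · simp only [zero_mul, map_zero, norm_zero, div_zero]
    positivity
  calc RCLike.re (c * inner 𝕜 x y) / (‖c‖ * (‖x‖ * ‖y‖))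
      ≤ ‖c * inner 𝕜 x y‖ / (‖c‖ * (‖x‖ * ‖y‖)) := by gcongr; exact RCLike.re_le_norm _
    _ = ‖inner 𝕜 x y‖ / (‖x‖ * ‖y‖) := by
      rw [norm_mul, mul_div_mul_left _ _ (norm_ne_zero_iff.mpr hc)]

theorem exists_acuteAngle_eq_angle_smul_right (x y : H) :
    ∃ c : 𝕜, ‖c‖ = 1 ∧ acuteAngle 𝕜 x y = ∠ᵣ x (c • y) := by
  let _ : InnerProductSpace ℝ H := InnerProductSpace.rclikeToReal 𝕜 H
  obtain ⟨c, hc, hcxy⟩ := RCLike.exists_norm_eq_one_mul_eq_norm (inner 𝕜 x y)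
  refine ⟨c, hc, ?_⟩
  rw [acuteAngle, InnerProductGeometry.angle, real_inner_eq_re_inner 𝕜, inner_smul_right, hcxy,
    RCLike.ofReal_re, norm_smul, hc, one_mul]

theorem acuteAngle_le_acuteAngle_add_acuteAngle (x y z : H) :
    acuteAngle 𝕜 x z ≤ acuteAngle 𝕜 x y + acuteAngle 𝕜 y z := by
  let _ : InnerProductSpace ℝ H := InnerProductSpace.rclikeToReal 𝕜 H
  obtain ⟨c, hc, hxy⟩ := exists_acuteAngle_eq_angle_smul_right (𝕜 := 𝕜) x y
  obtain ⟨d, -, hyz⟩ := exists_acuteAngle_eq_angle_smul_right (𝕜 := 𝕜) (c • y) z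
  rw [acuteAngle_smul_left (by rintro rfl; simp at hc)] at hyz
  calc acuteAngle 𝕜 x z ≤ ∠ᵣ x (d • z) := acuteAngle_le_angle_smul_right x z d
    _ ≤ ∠ᵣ x (c • y) + ∠ᵣ (c • y) (d • z) := InnerProductGeometry.angle_le_angle_add_angle _ _ _
    _ = acuteAngle 𝕜 x y + acuteAngle 𝕜 y z := by rw [hxy, hyz]

theorem abs_acuteAngle_sub_acuteAngle_le (x y z : H) :
    |acuteAngle 𝕜 x z - acuteAngle 𝕜 y z| ≤ acuteAngle 𝕜 x y := by
  have h₁ := acuteAngle_le_acuteAngle_add_acuteAngle (𝕜 := 𝕜) x y z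
  have h₂ := acuteAngle_le_acuteAngle_add_acuteAngle (𝕜 := 𝕜) y x z
  rw [acuteAngle_comm y x] at h₂
  exact abs_sub_le_iff.mpr ⟨by linarith, by linarith⟩

end AcuteAngle

theorem cos_sq_angle_diff_le_general {𝕜 H : Type*} [RCLike 𝕜] [NormedAddCommGroup H]
    [InnerProductSpace 𝕜 H]
    (x y z : H) :
    |Real.cos (acuteAngle 𝕜 x z) ^ 2 - Real.cos (acuteAngle 𝕜 y z) ^ 2| ≤
      Real.sin (acuteAngle 𝕜 x y) :=
  abs_cos_sq_sub_cos_sq_le_sin (abs_acuteAngle_sub_acuteAngle_le x y z)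
    (acuteAngle_le_pi_div_two x y)

/-- For nonzero vectors `x, y, z` in a finite-dimensional real or complex inner product space,
`|cos² θ(x,z) − cos² θ(y,z)| ≤ sin θ(x,y)`. -/
theorem cos_sq_angle_diff_le {𝕜 H : Type*} [RCLike 𝕜] [NormedAddCommGroup H]
    [InnerProductSpace 𝕜 H] [FiniteDimensional 𝕜 H]
    (x y z : H) (hx : x ≠ 0) (hy : y ≠ 0) (hz : z ≠ 0) :
    |Real.cos (acuteAngle 𝕜 x z) ^ 2 - Real.cos (acuteAngle 𝕜 y z) ^ 2| ≤
      Real.sin (acuteAngle 𝕜 x y) :=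
  cos_sq_angle_diff_le_general x y z
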